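/- arXiv:2307.12754 — 3 statements merged into one kernel-verified Lean document; each statement's English description precedes it below -/
import Mathlib

section
/- For every nonnegative integer n and every real x, the normalised Hermite polynomial satisfies the bound |h_n(x)| ≤ exp(x²/4). -/
/-!
Shifting the contour in `He_n(x) = 𝔼[(x + iY)^n]`, `Y ~ 𝒩(0, 1)`, by `ix/2` gives
`√(2π) e^{-x²/8} He_n(x) = ∫ (x/2 + iξ)^n e^{-(ξ² + ixξ)/2} dξ`; we check this identity through
the three-term recurrence, each step being the vanishing integral of a derivative. Hence
`√(2π) e^{-x²/8} |He_n(x)| ≤ ∫ (ξ² + x²/4)^{n/2} e^{-ξ²/2} dξ`. The square of the right side is an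
integral over the plane, where AM-GM bounds the integrand by the radial function
`(|z|²/2 + x²/4)^n e^{-|z|²/2}`, whose integral is `2π n! ∑_{m ≤ n} (x²/4)^m / m! ≤ 2π n! e^{x²/4}`.
-/

/-- Probabilist Hermite polynomials. -/
noncomputable def He : ℕ → ℝ → ℝ
  | 0, _ => 1
  | 1, x => x
  | n + 2, x => x * He (n + 1) x - (n + 1) * He n x

/-- Normalised Hermite polynomials `h n = He n / √(n!)`. -/
noncomputable def hpoly (n : ℕ) (x : ℝ) : ℝ := He n x / Real.sqrt (Nat.factorial n)

open MeasureTheory Real Complex Finset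

lemma pow_le_factorial_mul_exp_half {y : ℝ} (hy : 0 ≤ y) (n : ℕ) :
    y ^ n ≤ 2 ^ n * n.factorial * rexp (y / 2) := by
  have h := Real.pow_div_factorial_le_exp (y / 2) (by positivity) n
  rw [div_pow, div_div, div_le_iff₀ (by positivity)] at h
  linarith

lemma sqrt_sq_add_pow_mul_exp_le {c : ℝ} (hc : 0 ≤ c) (n : ℕ) (ξ : ℝ) :
    √(ξ ^ 2 + c) ^ n * rexp (-ξ ^ 2 / 2) ≤
      2 ^ n * n.factorial * rexp ((1 + c) / 4) * rexp (-(1 / 4) * ξ ^ 2) := by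
  set y := √(ξ ^ 2 + c)
  have hy2 : y ^ 2 = ξ ^ 2 + c := Real.sq_sqrt (by positivity)
  -- `y / 2 ≤ (1 + y²) / 4` turns the exponential moment into a Gaussian one
  have hexp : rexp (y / 2) * rexp (-ξ ^ 2 / 2) ≤ rexp ((1 + c) / 4) * rexp (-(1 / 4) * ξ ^ 2) := by
    rw [← Real.exp_add, ← Real.exp_add, Real.exp_le_exp]
    nlinarith [sq_nonneg (y - 1)]
  calc y ^ n * rexp (-ξ ^ 2 / 2) ≤ 2 ^ n * n.factorial * rexp (y / 2) * rexp (-ξ ^ 2 / 2) := by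
        gcongr; exact pow_le_factorial_mul_exp_half (Real.sqrt_nonneg _) n
    _ ≤ _ := by rw [mul_assoc _ (rexp _), mul_assoc _ (rexp _)]; gcongr

lemma integrable_of_norm_le_sqrt_sq_add_pow_mul_exp {E : Type*} [NormedAddCommGroup E]
    {f : ℝ → E} (hf : Continuous f) {c : ℝ} (hc : 0 ≤ c) (n : ℕ)
    (hle : ∀ ξ, ‖f ξ‖ ≤ √(ξ ^ 2 + c) ^ n * rexp (-ξ ^ 2 / 2)) : Integrable f :=
  ((integrable_exp_neg_mul_sq (by norm_num : (0 : ℝ) < 1 / 4)).const_mul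
    (2 ^ n * n.factorial * rexp ((1 + c) / 4))).mono' hf.aestronglyMeasurable
    (.of_forall fun ξ => (hle ξ).trans (sqrt_sq_add_pow_mul_exp_le hc n ξ))

noncomputable def hermiteIntegrand (x : ℝ) (n : ℕ) (ξ : ℝ) : ℂ :=
  (x / 2 + ξ * I) ^ n * cexp (-(ξ ^ 2 + x * ξ * I) / 2)

lemma norm_hermiteIntegrand (x : ℝ) (n : ℕ) (ξ : ℝ) :
    ‖hermiteIntegrand x n ξ‖ = √(ξ ^ 2 + x ^ 2 / 4) ^ n * rexp (-ξ ^ 2 / 2) := by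
  have hbase : ‖(x / 2 + ξ * I : ℂ)‖ = √(ξ ^ 2 + x ^ 2 / 4) := by
    rw [show (x / 2 + ξ * I : ℂ) = ((x / 2 : ℝ) : ℂ) + ξ * I by push_cast; ring,
      Complex.norm_add_mul_I]
    ring_nf
  have hexp : (-(ξ ^ 2 + x * ξ * I) / 2 : ℂ).re = -ξ ^ 2 / 2 := by
    simp [sq]
  rw [hermiteIntegrand, norm_mul, norm_pow, hbase, Complex.norm_exp, hexp]

lemma continuous_hermiteIntegrand (x : ℝ) (n : ℕ) : Continuous (hermiteIntegrand x n) := by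
  unfold hermiteIntegrand; fun_prop

lemma integrable_hermiteIntegrand (x : ℝ) (n : ℕ) : Integrable (hermiteIntegrand x n) :=
  integrable_of_norm_le_sqrt_sq_add_pow_mul_exp (continuous_hermiteIntegrand x n)
    (by positivity) n fun ξ => (norm_hermiteIntegrand x n ξ).le

lemma hasDerivAt_hermiteIntegrand (x : ℝ) (n : ℕ) (ξ : ℝ) :
    HasDerivAt (hermiteIntegrand x n)
      (I * (n * hermiteIntegrand x (n - 1) ξ + hermiteIntegrand x (n + 1) ξ
        - x * hermiteIntegrand x n ξ)) ξ := by
  have hu : HasDerivAt (fun ξ : ℝ => (x / 2 + ξ * I : ℂ)) I ξ := by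
    simpa using ((hasDerivAt_id (ξ : ℂ)).comp_ofReal.mul_const I).const_add (x / 2 : ℂ)
  have hq : HasDerivAt (fun ξ : ℝ => (-(ξ ^ 2 + x * ξ * I) / 2 : ℂ)) (-(ξ + x * I / 2)) ξ := by
    have := (((hasDerivAt_pow 2 (ξ : ℂ)).add ((hasDerivAt_id (ξ : ℂ)).const_mul
      (x : ℂ) |>.mul_const I)).neg.div_const 2).comp_ofReal
    convert this using 1
    · funext y; simp
    · simp; ring
  -- with `u = x/2 + ξi`, the weight's logarithmic derivative `-(ξ + xi/2)` is `i (u - x)`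
  refine ((hu.fun_pow n).fun_mul hq.cexp).congr_deriv ?_
  simp only [hermiteIntegrand]
  ring_nf
  simp only [I_sq]
  ring

/-- At `n = 0` the truncated `n - 1` is harmless: its coefficient vanishes. -/
lemma integral_hermiteIntegrand_succ (x : ℝ) (n : ℕ) :
    ∫ ξ, hermiteIntegrand x (n + 1) ξ =
      x * (∫ ξ, hermiteIntegrand x n ξ) - n * ∫ ξ, hermiteIntegrand x (n - 1) ξ := by
  have h₀ := (integrable_hermiteIntegrand x (n - 1)).const_mul (n : ℂ)
  have h₁ := (integrable_hermiteIntegrand x n).const_mul (x : ℂ)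
  have h₂ := integrable_hermiteIntegrand x (n + 1)
  have h₀₂ : Integrable fun ξ =>
      (n : ℂ) * hermiteIntegrand x (n - 1) ξ + hermiteIntegrand x (n + 1) ξ := h₀.add h₂
  have h := integral_eq_zero_of_hasDerivAt_of_integrable (hasDerivAt_hermiteIntegrand x n)
    ((h₀₂.sub h₁).const_mul I) (integrable_hermiteIntegrand x n)
  rw [integral_const_mul, integral_sub h₀₂ h₁, integral_add h₀ h₂, integral_const_mul,
    integral_const_mul, mul_eq_zero] at h
  rw [← sub_eq_zero, ← h.resolve_left I_ne_zero]
  ring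

lemma integral_hermiteIntegrand (x : ℝ) :
    ∀ n, ∫ ξ, hermiteIntegrand x n ξ = He n x * ∫ ξ, hermiteIntegrand x 0 ξ
  | 0 => by simp [He]
  | 1 => by simp [integral_hermiteIntegrand_succ x 0, He]
  | n + 2 => by
    rw [integral_hermiteIntegrand_succ, integral_hermiteIntegrand x (n + 1), Nat.add_sub_cancel,
      integral_hermiteIntegrand x n, He]
    push_cast
    ring

lemma norm_integral_hermiteIntegrand_zero (x : ℝ) :
    ‖∫ ξ, hermiteIntegrand x 0 ξ‖ = √(2 * π) * rexp (-x ^ 2 / 8) := by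
  have h := integral_cexp_quadratic (b := -1 / 2) (by norm_num) (-(x * I / 2)) 0
  simp only [hermiteIntegrand, pow_zero, one_mul]
  rw [show (fun ξ : ℝ => cexp (-(ξ ^ 2 + x * ξ * I) / 2)) =
    fun ξ : ℝ => cexp (-1 / 2 * ξ ^ 2 + -(x * I / 2) * ξ + 0) by funext; ring_nf, h]
  have h2π : (π / -(-1 / 2) : ℂ) = ((2 * π : ℝ) : ℂ) := by push_cast; ring
  have hre : (0 - (-(x * I / 2)) ^ 2 / (4 * (-1 / 2)) : ℂ) = ((-x ^ 2 / 8 : ℝ) : ℂ) := by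
    push_cast; ring_nf; simp only [I_sq]; ring
  rw [norm_mul, h2π, hre, Complex.norm_exp_ofReal,
    Complex.norm_cpow_eq_rpow_re_of_pos (by positivity), Real.sqrt_eq_rpow]
  norm_num

lemma Complex.integral_re_mul_im_eq_sq {𝕜 : Type*} [RCLike 𝕜] (f : ℝ → 𝕜) :
    ∫ z : ℂ, f z.re * f z.im = (∫ ξ, f ξ) ^ 2 := by
  calc ∫ z : ℂ, f z.re * f z.im = ∫ p : ℝ × ℝ, f p.1 * f p.2 :=
        Complex.volume_preserving_equiv_real_prod.integral_comp' (g := fun p => f p.1 * f p.2)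
    _ = (∫ ξ, f ξ) ^ 2 := by rw [Measure.volume_eq_prod, integral_prod_mul, sq]

lemma Complex.integral_norm_sq_div_two_pow_mul_exp (k : ℕ) :
    ∫ z : ℂ, (‖z‖ ^ 2 / 2) ^ k * rexp (-(‖z‖ ^ 2 / 2)) = 2 * π * k.factorial := by
  have h := Complex.integral_rpow_mul_exp_neg_mul_rpow (p := 2) (q := 2 * k) (b := 1 / 2)
    (by norm_num) (by linarith [k.cast_nonneg (α := ℝ)]) (by norm_num)
  have hf : ∀ z : ℂ, (‖z‖ ^ 2 / 2) ^ k * rexp (-(‖z‖ ^ 2 / 2)) =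
      (2 ^ k)⁻¹ * (‖z‖ ^ (2 * k : ℝ) * rexp (-(1 / 2) * ‖z‖ ^ (2 : ℝ))) := by
    intro z
    rw [Real.rpow_mul_natCast (norm_nonneg z), Real.rpow_two, div_pow]
    field_simp
  simp_rw [hf]
  rw [integral_const_mul, h, show (2 * k + 2 : ℝ) / 2 = k + 1 by ring,
    Real.Gamma_nat_eq_factorial, show -((2 * k : ℝ) + 2) / 2 = -(k + 1 : ℕ) by push_cast; ring,
    Real.rpow_neg (by norm_num), Real.rpow_natCast, one_div, inv_pow, inv_inv]
  field_simp
  ring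

lemma Complex.integrable_norm_sq_div_two_pow_mul_exp (k : ℕ) :
    Integrable fun z : ℂ => (‖z‖ ^ 2 / 2) ^ k * rexp (-(‖z‖ ^ 2 / 2)) :=
  Integrable.of_integral_ne_zero <| by
    rw [Complex.integral_norm_sq_div_two_pow_mul_exp]; positivity

lemma Complex.norm_sq_div_two_add_pow_mul_exp_eq_sum (t : ℝ) (n : ℕ) (z : ℂ) :
    (‖z‖ ^ 2 / 2 + t) ^ n * rexp (-(‖z‖ ^ 2 / 2)) = ∑ m ∈ range (n + 1),
      t ^ m * n.choose m * ((‖z‖ ^ 2 / 2) ^ (n - m) * rexp (-(‖z‖ ^ 2 / 2))) := by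
  rw [add_comm, add_pow, sum_mul]
  exact sum_congr rfl fun m _ => by ring

lemma Complex.integrable_norm_sq_div_two_add_pow_mul_exp (t : ℝ) (n : ℕ) :
    Integrable fun z : ℂ => (‖z‖ ^ 2 / 2 + t) ^ n * rexp (-(‖z‖ ^ 2 / 2)) := by
  simp_rw [Complex.norm_sq_div_two_add_pow_mul_exp_eq_sum]
  exact integrable_finsetSum _ fun m _ =>
    (Complex.integrable_norm_sq_div_two_pow_mul_exp (n - m)).const_mul _

lemma Complex.integral_norm_sq_div_two_add_pow_mul_exp (t : ℝ) (n : ℕ) :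
    ∫ z : ℂ, (‖z‖ ^ 2 / 2 + t) ^ n * rexp (-(‖z‖ ^ 2 / 2)) =
      2 * π * n.factorial * ∑ m ∈ range (n + 1), t ^ m / m.factorial := by
  simp_rw [Complex.norm_sq_div_two_add_pow_mul_exp_eq_sum]
  rw [integral_finsetSum _ fun m _ =>
    (Complex.integrable_norm_sq_div_two_pow_mul_exp (n - m)).const_mul _, mul_sum]
  refine sum_congr rfl fun m hm => ?_
  have hmn : m ≤ n := Nat.lt_succ_iff.mp (mem_range.mp hm)
  rw [integral_const_mul, Complex.integral_norm_sq_div_two_pow_mul_exp,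
    ← Nat.choose_mul_factorial_mul_factorial hmn]
  push_cast
  field_simp

lemma sq_integral_sqrt_sq_add_pow_mul_exp_le {t : ℝ} (ht : 0 ≤ t) (n : ℕ) :
    (∫ ξ, √(ξ ^ 2 + t) ^ n * rexp (-ξ ^ 2 / 2)) ^ 2 ≤ 2 * π * n.factorial * rexp t := by
  rw [← Complex.integral_re_mul_im_eq_sq]
  calc ∫ z : ℂ, √(z.re ^ 2 + t) ^ n * rexp (-z.re ^ 2 / 2) *
        (√(z.im ^ 2 + t) ^ n * rexp (-z.im ^ 2 / 2))
      ≤ ∫ z : ℂ, (‖z‖ ^ 2 / 2 + t) ^ n * rexp (-(‖z‖ ^ 2 / 2)) := by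
        refine integral_mono_of_nonneg (.of_forall fun z => by positivity)
          (Complex.integrable_norm_sq_div_two_add_pow_mul_exp t n) (.of_forall fun z => ?_)
        have hre : 0 ≤ z.re ^ 2 + t := by positivity
        have him : 0 ≤ z.im ^ 2 + t := by positivity
        have hamgm : √(z.re ^ 2 + t) * √(z.im ^ 2 + t) ≤ (z.re ^ 2 + t + (z.im ^ 2 + t)) / 2 := by
          nlinarith [sq_nonneg (√(z.re ^ 2 + t) - √(z.im ^ 2 + t)), Real.sq_sqrt hre,
            Real.sq_sqrt him]
        simp only [Complex.sq_norm, Complex.normSq_apply]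
        calc _ = (√(z.re ^ 2 + t) * √(z.im ^ 2 + t)) ^ n *
              rexp (-((z.re * z.re + z.im * z.im) / 2)) := by
              rw [mul_pow, show -((z.re * z.re + z.im * z.im) / 2) = -z.re ^ 2 / 2 + -z.im ^ 2 / 2
                by ring, Real.exp_add]
              ring
          _ ≤ _ := by gcongr; linarith
    _ ≤ 2 * π * n.factorial * rexp t := by
        rw [Complex.integral_norm_sq_div_two_add_pow_mul_exp]
        gcongr
        exact Real.sum_le_exp_of_nonneg ht _

lemma sq_He_le (n : ℕ) (x : ℝ) : He n x ^ 2 ≤ n.factorial * rexp (x ^ 2 / 2) := by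
  set A := ∫ ξ, √(ξ ^ 2 + x ^ 2 / 4) ^ n * rexp (-ξ ^ 2 / 2)
  have hnorm : |He n x| * (√(2 * π) * rexp (-x ^ 2 / 8)) ≤ A := by
    calc |He n x| * (√(2 * π) * rexp (-x ^ 2 / 8)) = ‖∫ ξ, hermiteIntegrand x n ξ‖ := by
          rw [integral_hermiteIntegrand, norm_mul, norm_integral_hermiteIntegrand_zero,
            Complex.norm_real, Real.norm_eq_abs]
      _ ≤ ∫ ξ, ‖hermiteIntegrand x n ξ‖ := norm_integral_le_integral_norm _
      _ = A := by simp_rw [norm_hermiteIntegrand]; rfl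
  have hexp : rexp (-x ^ 2 / 8) ^ 2 = rexp (-x ^ 2 / 4) := by
    rw [← Real.exp_nat_mul]; ring_nf
  have key : He n x ^ 2 * (2 * π * rexp (-x ^ 2 / 4)) ≤
      n.factorial * rexp (x ^ 2 / 2) * (2 * π * rexp (-x ^ 2 / 4)) := by
    calc He n x ^ 2 * (2 * π * rexp (-x ^ 2 / 4))
        = (|He n x| * (√(2 * π) * rexp (-x ^ 2 / 8))) ^ 2 := by
          rw [mul_pow, mul_pow, sq_abs, Real.sq_sqrt (by positivity), hexp]
      _ ≤ A ^ 2 := pow_le_pow_left₀ (by positivity) hnorm 2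
      _ ≤ 2 * π * n.factorial * rexp (x ^ 2 / 4) :=
          sq_integral_sqrt_sq_add_pow_mul_exp_le (by positivity) n
      _ = n.factorial * rexp (x ^ 2 / 2) * (2 * π * rexp (-x ^ 2 / 4)) := by
          rw [show rexp (x ^ 2 / 4) = rexp (x ^ 2 / 2) * rexp (-x ^ 2 / 4) by
            rw [← Real.exp_add]; ring_nf]
          ring
  exact le_of_mul_le_mul_right key (by positivity)

/-- Cramer's inequality: `|h_n(x)| ≤ exp(x²/4)`. -/
theorem hermite_normalised_bound (n : ℕ) (x : ℝ) :
    |hpoly n x| ≤ Real.exp (x ^ 2 / 4) := by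
  refine abs_le_of_sq_le_sq ?_ (Real.exp_pos _).le
  rw [hpoly, div_pow, Real.sq_sqrt (by positivity), div_le_iff₀ (by positivity),
    ← Real.exp_nat_mul]
  calc He n x ^ 2 ≤ n.factorial * rexp (x ^ 2 / 2) := sq_He_le n x
    _ = rexp (↑2 * (x ^ 2 / 4)) * n.factorial := by ring_nf
end

section
/- For every nonnegative integer k, any x, x' ∈ ℝ^d, and any orthogonal matrix R ∈ O(d), the sum over multi-indices α ∈ ℕ^d with |α| = k of H_α(x)·H_α(x') equals the sum over the same multi-indices of H_α(Rx)·H_α(Rx'). In other words, the degree-k Hermite kernel ∑_{|α|=k} H_α(x)H_α(x') is invariant under simultaneous rotation of both arguments. -/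
open Matrix

/-- Multivariate Hermite polynomials `H_α(x) = ∏_a h_{α_a}(x_a)`. -/
noncomputable def Hmul {d : ℕ} (α : Fin d → ℕ) (x : Fin d → ℝ) : ℝ :=
  ∏ a, hpoly (α a) (x a)


/-!
For a standard Gaussian `Z`, `He n c = 𝔼[(c + iZ)^n]`. Hence, for independent standard Gaussian
vectors `Z, W`, the multinomial theorem gives
`k! ∑_{|α|=k} H_α(x) H_α(x') = 𝔼[⟨x + iZ, x' + iW⟩^k]`,
and replacing `(x, x')` by `(Rx, Rx')` does not change this, because `(Z, W)` and `(RZ, RW)` have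
the same law and `⟨R(x + iZ), R(x' + iW)⟩ = ⟨x + iZ, x' + iW⟩`.

Only expectations of polynomials occur, so the expectation is replaced by the linear functional
`imGauss` sending the monomial `X^s` to `∏ₐ 𝔼[(iZ)^{sₐ}]`. It is determined by the integration by
parts rule `imGauss (X b * P) = -imGauss (∂_b P)`, which survives orthogonal changes of variables.
-/

noncomputable def imGaussMoment : ℕ → ℝ
  | 0 => 1
  | 1 => 0
  | n + 2 => -(n + 1) * imGaussMoment n

lemma imGaussMoment_succ (n : ℕ) : imGaussMoment (n + 1) = -n * imGaussMoment (n - 1) := by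
  cases n <;> simp [imGaussMoment]

namespace MvPolynomial

variable {σ : Type*}

lemma vars_C_add_X_pow_subset (c : ℝ) (i : σ) (n : ℕ) :
    ((C c + X i : MvPolynomial σ ℝ) ^ n).vars ⊆ {i} := by
  classical
  exact (vars_pow _ _).trans <| (vars_add_subset _ _).trans (by simp [vars_C, vars_X])

lemma vars_C_add_X_mul_C_add_X_pow_subset [DecidableEq σ] (c c' : ℝ) (i j : σ) (n : ℕ) :
    (((C c + X i) * (C c' + X j) : MvPolynomial σ ℝ) ^ n).vars ⊆ {i, j} := by
  rw [mul_pow]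
  refine (vars_mul _ _).trans (Finset.union_subset ?_ ?_)
  · exact (vars_C_add_X_pow_subset c i n).trans (by simp)
  · exact (vars_C_add_X_pow_subset c' j n).trans (by simp)

lemma linearMap_monomial (L : MvPolynomial σ ℝ →ₗ[ℝ] ℝ) (s : σ →₀ ℕ) (c : ℝ) :
    L (monomial s c) = c * L (monomial s 1) := by
  rw [← smul_eq_mul, ← map_smul, smul_monomial, smul_eq_mul, mul_one]

variable [Fintype σ]

noncomputable def imGauss : MvPolynomial σ ℝ →ₗ[ℝ] ℝ :=
  (basisMonomials σ ℝ).constr ℝ fun s => ∏ a, imGaussMoment (s a)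

lemma imGauss_monomial (s : σ →₀ ℕ) (c : ℝ) :
    imGauss (monomial s c) = c * ∏ a, imGaussMoment (s a) := by
  rw [linearMap_monomial]
  exact congrArg (c * ·) ((basisMonomials σ ℝ).constr_basis ℝ _ s)

lemma imGauss_C_mul (c : ℝ) (P : MvPolynomial σ ℝ) : imGauss (C c * P) = c * imGauss P := by
  rw [C_mul', LinearMap.map_smul, smul_eq_mul]

lemma imGauss_C (c : ℝ) : imGauss (C c : MvPolynomial σ ℝ) = c := by
  simp [← monomial_zero', imGauss_monomial, imGaussMoment]

lemma imGauss_one : imGauss (1 : MvPolynomial σ ℝ) = 1 := by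
  rw [← C_1, imGauss_C]

lemma imGauss_X [DecidableEq σ] (i : σ) : imGauss (X i : MvPolynomial σ ℝ) = 0 := by
  rw [X, imGauss_monomial, Fintype.prod_eq_single i fun a ha => by simp [ha, imGaussMoment]]
  simp [imGaussMoment]

lemma imGauss_X_mul (b : σ) (P : MvPolynomial σ ℝ) :
    imGauss (X b * P) = -imGauss (pderiv b P) := by
  classical
  induction P using induction_on' with
  | add p q hp hq => rw [mul_add, map_add, map_add, map_add, hp, hq, neg_add]
  | monomial s c =>
    rw [pderiv_monomial, ← pow_one (X b), ← monomial_single_add, imGauss_monomial,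
      imGauss_monomial, ← Finset.mul_prod_erase _ _ (Finset.mem_univ b),
      ← Finset.mul_prod_erase _ _ (Finset.mem_univ b)]
    have hrest : ∀ a ∈ Finset.univ.erase b,
        imGaussMoment (Finsupp.single b 1 a + s a)
          = imGaussMoment (s a - Finsupp.single b 1 a) := by
      intro a ha
      simp [Finsupp.single_eq_of_ne (Finset.ne_of_mem_erase ha)]
    simp only [Finsupp.add_apply, Finsupp.tsub_apply, Finset.prod_congr rfl hrest,
      Finsupp.single_eq_same, add_comm 1, imGaussMoment_succ]
    ring

lemma eq_imGauss_of_X_mul (L : MvPolynomial σ ℝ →ₗ[ℝ] ℝ) (h1 : L 1 = 1)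
    (hX : ∀ b P, L (X b * P) = -L (pderiv b P)) : L = imGauss := by
  refine (basisMonomials σ ℝ).ext fun s => ?_
  simp only [coe_basisMonomials]
  induction s using WellFoundedLT.induction with
  | _ s ih =>
    by_cases hs0 : s = 0
    · rw [hs0, monomial_zero', C_1, h1, imGauss_one]
    obtain ⟨b, hb⟩ := Finsupp.ne_iff.mp hs0
    set t := s - Finsupp.single b 1
    have hs : monomial s (1 : ℝ) = X b * monomial t 1 := by
      rw [← pow_one (X b), ← monomial_single_add, add_comm, Finsupp.sub_add_single_one_cancel hb]
    have hlt : t - Finsupp.single b 1 < s := calc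
      t - Finsupp.single b 1 ≤ t := tsub_le_self
      _ < t + Finsupp.single b 1 :=
        lt_add_of_pos_right t (pos_iff_ne_zero.mpr (Finsupp.single_ne_zero.mpr one_ne_zero))
      _ = s := Finsupp.sub_add_single_one_cancel hb
    rw [hs, hX, imGauss_X_mul, pderiv_monomial, one_mul, linearMap_monomial L,
      linearMap_monomial imGauss, ih _ hlt]

noncomputable def substLinear (Q : Matrix σ σ ℝ) : MvPolynomial σ ℝ →ₐ[ℝ] MvPolynomial σ ℝ :=
  aeval fun a => ∑ b, C (Q a b) * X b

lemma substLinear_X (Q : Matrix σ σ ℝ) (a : σ) : substLinear Q (X a) = ∑ b, C (Q a b) * X b :=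
  aeval_X _ _

lemma pderiv_substLinear [DecidableEq σ] (Q : Matrix σ σ ℝ) (b : σ) (P : MvPolynomial σ ℝ) :
    pderiv b (substLinear Q P) = ∑ c, C (Q c b) * substLinear Q (pderiv c P) := by
  induction P using induction_on with
  | C a => simp [substLinear]
  | add p q hp hq => simp only [map_add, hp, hq, mul_add, Finset.sum_add_distrib]
  | mul_X p i hp =>
    have hXi : pderiv b (substLinear Q (X i)) = C (Q i b) := by
      simp [substLinear_X, pderiv_X, Pi.single_apply]
    simp only [map_mul, Derivation.leibniz, hp, hXi, pderiv_X, Pi.single_apply, smul_eq_mul,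
      mul_one, mul_zero, map_add, mul_add, Finset.sum_add_distrib, apply_ite (substLinear Q),
      map_zero, mul_ite, Finset.sum_ite_eq, Finset.mem_univ, if_true, Finset.mul_sum]
    rw [mul_comm]
    exact congrArg _ (Finset.sum_congr rfl fun c _ => mul_left_comm _ _ _)

lemma imGauss_substLinear [DecidableEq σ] {Q : Matrix σ σ ℝ} (hQ : Qᵀ * Q = 1)
    (P : MvPolynomial σ ℝ) :
    imGauss (substLinear Q P) = imGauss P := by
  suffices imGauss ∘ₗ (substLinear Q).toLinearMap = imGauss from LinearMap.congr_fun this P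
  refine eq_imGauss_of_X_mul _ (by simp [imGauss_one]) fun b P => ?_
  have hQQ : ∀ e, ∑ c, Q b c * Q e c = if b = e then 1 else 0 := fun e => by
    rw [← Matrix.one_apply, ← mul_eq_one_comm.mp hQ, Matrix.mul_apply]; rfl
  simp only [LinearMap.comp_apply, AlgHom.toLinearMap_apply, map_mul, substLinear_X,
    Finset.sum_mul, map_sum, mul_assoc, imGauss_C_mul, imGauss_X_mul, pderiv_substLinear,
    Finset.mul_sum, mul_neg, Finset.sum_neg_distrib, neg_inj]
  rw [Finset.sum_comm]
  simp [← mul_assoc, ← Finset.sum_mul, hQQ]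

lemma prod_imGaussMoment_add {s t : σ →₀ ℕ} (h : Disjoint s.support t.support) :
    ∏ a, imGaussMoment ((s + t) a) = (∏ a, imGaussMoment (s a)) * ∏ a, imGaussMoment (t a) := by
  rw [← Finset.prod_mul_distrib]
  refine Finset.prod_congr rfl fun a _ => ?_
  by_cases hs : s a = 0
  · simp [hs, imGaussMoment]
  have ht : t a = 0 := by
    by_contra ht
    exact Finset.disjoint_left.mp h (Finsupp.mem_support_iff.mpr hs)
      (Finsupp.mem_support_iff.mpr ht)
  simp [ht, imGaussMoment]

lemma imGauss_mul_of_disjoint_vars {P P' : MvPolynomial σ ℝ} (h : Disjoint P.vars P'.vars) :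
    imGauss (P * P') = imGauss P * imGauss P' := by
  conv_lhs => rw [P.as_sum, P'.as_sum, Finset.sum_mul_sum]
  conv_rhs => rw [P.as_sum, P'.as_sum, map_sum, map_sum, Finset.sum_mul_sum]
  rw [map_sum]
  refine Finset.sum_congr rfl fun s hs => ?_
  rw [map_sum]
  refine Finset.sum_congr rfl fun t ht => ?_
  have hst : Disjoint s.support t.support :=
    Finset.disjoint_left.mpr fun a has hat => Finset.disjoint_left.mp h
      ((mem_vars_iff_mem_support a).mpr ⟨s, hs, has⟩)
      ((mem_vars_iff_mem_support a).mpr ⟨t, ht, hat⟩)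
  rw [monomial_mul, imGauss_monomial, imGauss_monomial, imGauss_monomial,
    prod_imGaussMoment_add hst]
  ring

lemma imGauss_prod_of_pairwiseDisjoint_vars {ι : Type*} (s : Finset ι) (P : ι → MvPolynomial σ ℝ)
    (h : (s : Set ι).PairwiseDisjoint fun i => (P i).vars) :
    imGauss (∏ i ∈ s, P i) = ∏ i ∈ s, imGauss (P i) := by
  classical
  induction s using Finset.induction_on with
  | empty => simp [imGauss_one]
  | insert i s hi ih =>
    rw [Finset.coe_insert, Set.pairwiseDisjoint_insert_of_notMem (by simpa using hi)] at h
    rw [Finset.prod_insert hi, Finset.prod_insert hi, imGauss_mul_of_disjoint_vars, ih h.1]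
    exact (Finset.disjoint_biUnion_right _ _ _).mpr (fun j hj => h.2 j hj) |>.mono_right
      (vars_prod _)

lemma imGauss_C_add_X_pow (c : ℝ) (i : σ) (n : ℕ) :
    imGauss ((C c + X i : MvPolynomial σ ℝ) ^ n) = He n c := by
  classical
  induction n using Nat.twoStepInduction with
  | zero => simp [imGauss_one, He]
  | one => simp [imGauss_C, imGauss_X, He]
  | more n ih₂ ih₁ =>
    have hpow : (C c + X i : MvPolynomial σ ℝ) ^ (n + 2)
        = C c * (C c + X i) ^ (n + 1) + X i * (C c + X i) ^ (n + 1) := by ring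
    rw [hpow, map_add, imGauss_C_mul, imGauss_X_mul, pderiv_pow, map_add, pderiv_C, pderiv_X_self,
      zero_add, mul_one, add_tsub_cancel_right, ← C_eq_coe_nat, imGauss_C_mul, ih₁, ih₂, He]
    push_cast
    ring

lemma imGauss_C_add_X_mul_C_add_X_pow {i j : σ} (hij : i ≠ j) (c c' : ℝ) (n : ℕ) :
    imGauss (((C c + X i) * (C c' + X j) : MvPolynomial σ ℝ) ^ n) = He n c * He n c' := by
  rw [mul_pow, imGauss_mul_of_disjoint_vars, imGauss_C_add_X_pow, imGauss_C_add_X_pow]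
  exact Finset.disjoint_of_subset_left (vars_C_add_X_pow_subset c i n) <|
    Finset.disjoint_of_subset_right (vars_C_add_X_pow_subset c' j n) (by simpa using hij)

end MvPolynomial

open MvPolynomial

lemma Matrix.dotProduct_mulVec_mulVec_of_transpose_mul_self_eq_one {ι R : Type*} [Fintype ι]
    [DecidableEq ι] [CommRing R] {M : Matrix ι ι R} (hM : Mᵀ * M = 1) (v w : ι → R) :
    (M *ᵥ v) ⬝ᵥ (M *ᵥ w) = v ⬝ᵥ w := by
  rw [dotProduct_mulVec, ← vecMul_transpose, vecMul_vecMul, hM, vecMul_one]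

lemma Matrix.fromBlocks_transpose_mul_self_eq_one {ι R : Type*} [Fintype ι] [DecidableEq ι]
    [Semiring R] {M : Matrix ι ι R} (hM : Mᵀ * M = 1) : (fromBlocks M 0 0 M)ᵀ * fromBlocks M 0 0 M = 1 := by
  rw [fromBlocks_transpose, fromBlocks_multiply]
  simp [hM]

section Pairing

variable {ι : Type*} [Fintype ι]

noncomputable def hermitePairing (x y : ι → ℝ) : MvPolynomial (ι ⊕ ι) ℝ :=
  (fun a => C (x a) + X (Sum.inl a)) ⬝ᵥ (fun a => C (y a) + X (Sum.inr a))

lemma substLinear_fromBlocks_hermitePairing [DecidableEq ι] {R : Matrix ι ι ℝ} (hR : Rᵀ * R = 1)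
    (x y : ι → ℝ) :
    substLinear (fromBlocks R 0 0 R) (hermitePairing (R *ᵥ x) (R *ᵥ y)) = hermitePairing x y := by
  have hRC : (R.map C)ᵀ * R.map C = (1 : Matrix ι ι (MvPolynomial (ι ⊕ ι) ℝ)) := by
    rw [← transpose_map, ← Matrix.map_mul, hR, Matrix.map_one _ C_0 C_1]
  have hsubst : ∀ (z : ι → ℝ) (a : ι),
      substLinear (fromBlocks R 0 0 R) (C ((R *ᵥ z) a) + X (Sum.inl a))
        = (R.map C *ᵥ fun b => C (z b) + X (Sum.inl b)) a ∧
      substLinear (fromBlocks R 0 0 R) (C ((R *ᵥ z) a) + X (Sum.inr a))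
        = (R.map C *ᵥ fun b => C (z b) + X (Sum.inr b)) a := by
    intro z a
    simp [substLinear_X, Fintype.sum_sum_type, mulVec, dotProduct, mul_add, Finset.sum_add_distrib]
  rw [hermitePairing, ← AlgHom.coe_toRingHom, RingHom.map_dotProduct]
  simp only [AlgHom.coe_toRingHom, Function.comp_def, fun z a => (hsubst z a).1,
    fun z a => (hsubst z a).2]
  exact dotProduct_mulVec_mulVec_of_transpose_mul_self_eq_one hRC _ _

lemma imGauss_prod_hermitePairing_factor_pow (x y : ι → ℝ) (α : ι → ℕ) :
    imGauss (∏ a, ((C (x a) + X (Sum.inl a)) * (C (y a) + X (Sum.inr a))) ^ α a)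
      = ∏ a, He (α a) (x a) * He (α a) (y a) := by
  classical
  rw [imGauss_prod_of_pairwiseDisjoint_vars]
  · exact Finset.prod_congr rfl fun a _ => imGauss_C_add_X_mul_C_add_X_pow Sum.inl_ne_inr _ _ _
  · intro a _ b _ hab
    refine Finset.disjoint_of_subset_left (vars_C_add_X_mul_C_add_X_pow_subset _ _ _ _ _) <|
      Finset.disjoint_of_subset_right (vars_C_add_X_mul_C_add_X_pow_subset _ _ _ _ _) ?_
    simp [Ne.symm hab]

end Pairing

open scoped Nat

lemma hpoly_mul_hpoly (n : ℕ) (u v : ℝ) : hpoly n u * hpoly n v = He n u * He n v / n ! := by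
  rw [hpoly, hpoly, div_mul_div_comm, Real.mul_self_sqrt (Nat.cast_nonneg _)]

lemma Hmul_mul_Hmul {d : ℕ} (α : Fin d → ℕ) (x y : Fin d → ℝ) :
    Hmul α x * Hmul α y = ∏ a, He (α a) (x a) * He (α a) (y a) / (α a) ! := by
  simp only [Hmul, ← Finset.prod_mul_distrib, hpoly_mul_hpoly]

lemma imGauss_hermitePairing_pow {d : ℕ} (x y : Fin d → ℝ) (k : ℕ) :
    imGauss (hermitePairing x y ^ k)
      = k ! * ∑ α ∈ Finset.univ.piAntidiag k, Hmul α x * Hmul α y := by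
  rw [hermitePairing, dotProduct, Finset.sum_pow_eq_sum_piAntidiag, map_sum, Finset.mul_sum]
  refine Finset.sum_congr rfl fun α hα => ?_
  have hk : (k ! : ℝ) = Nat.multinomial Finset.univ α * ∏ a, ((α a) ! : ℝ) := by
    rw [← (Finset.mem_piAntidiag.mp hα).1, ← Nat.multinomial_spec]
    push_cast
    ring
  rw [← C_eq_coe_nat, imGauss_C_mul, imGauss_prod_hermitePairing_factor_pow, Hmul_mul_Hmul,
    Finset.prod_div_distrib, hk]
  have : ∏ a, ((α a) ! : ℝ) ≠ 0 := Finset.prod_ne_zero_iff.mpr fun a _ => by positivity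
  field_simp

lemma tsum_subtype_sum_eq_eq_sum_piAntidiag {ι M : Type*} [Fintype ι] [DecidableEq ι]
    [AddCommMonoid M] [TopologicalSpace M] (k : ℕ) (f : (ι → ℕ) → M) :
    ∑' α : {α : ι → ℕ // ∑ a, α a = k}, f α = ∑ α ∈ Finset.univ.piAntidiag k, f α := by
  rw [← Finset.tsum_subtype]
  exact tsum_congr_set_coe f (by ext; simp [Finset.mem_piAntidiag]; rfl)

/-- Rotation invariance of the degree-`k` Hermite kernel:
`∑_{|α|=k} H_α(x)H_α(x') = ∑_{|α|=k} H_α(Rx)H_α(Rx')` for orthogonal `R`. -/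
theorem hermite_kernel_rotation_invariant (d k : ℕ) (x x' : Fin d → ℝ)
    (R : Matrix (Fin d) (Fin d) ℝ) (hR : Rᵀ * R = 1) :
    ∑' α : {α : Fin d → ℕ // ∑ a, α a = k}, Hmul α.1 x * Hmul α.1 x'
      = ∑' α : {α : Fin d → ℕ // ∑ a, α a = k},
          Hmul α.1 (R.mulVec x) * Hmul α.1 (R.mulVec x') := by
  rw [tsum_subtype_sum_eq_eq_sum_piAntidiag k (fun α => Hmul α x * Hmul α x'),
    tsum_subtype_sum_eq_eq_sum_piAntidiag k (fun α => Hmul α (R *ᵥ x) * Hmul α (R *ᵥ x'))]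
  refine mul_left_cancel₀ (Nat.cast_ne_zero.mpr k.factorial_ne_zero : (k ! : ℝ) ≠ 0) ?_
  rw [← imGauss_hermitePairing_pow, ← imGauss_hermitePairing_pow,
    ← substLinear_fromBlocks_hermitePairing hR, ← map_pow,
    imGauss_substLinear (fromBlocks_transpose_mul_self_eq_one hR)]
end

section
/- For any positive semi-definite d×d real matrix A with eigenvalues λ_1,…,λ_d, the sum of square roots of the diagonal entries dominates the sum of square roots of the eigenvalues: ∑_{a=1}^d √(A_{aa}) ≥ ∑_{a=1}^d √(λ_a). -/
/-! With `S = A^{1/2}` we have `tr S = ∑ √λₐ`, while `A_aa = (S Sᵀ)_aa = ∑_b S_ab² ≥ S_aa²`;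
hence `S_aa ≤ √A_aa` for every `a`, and summing gives the inequality. -/

open Matrix

open scoped MatrixOrder

namespace Matrix

variable {n : Type*} [Fintype n]

lemma IsHermitian.trace_cfc {𝕜 : Type*} [RCLike 𝕜] [DecidableEq n] {A : Matrix n n 𝕜}
    (hA : A.IsHermitian) (f : ℝ → ℝ) :
    (hA.cfc f).trace = ∑ i, (f (hA.eigenvalues i) : 𝕜) := by
  have hU : star (hA.eigenvectorUnitary : Matrix n n 𝕜) * hA.eigenvectorUnitary = 1 :=
    Unitary.star_mul_self_of_mem hA.eigenvectorUnitary.2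
  rw [IsHermitian.cfc, Unitary.conjStarAlgAut_apply, trace_mul_cycle, hU, one_mul, trace_diagonal]
  rfl

lemma PosSemidef.trace_sqrt [DecidableEq n] {A : Matrix n n ℝ} (hA : A.PosSemidef) :
    (CFC.sqrt A).trace = ∑ i, √(hA.1.eigenvalues i) := by
  rw [CFC.sqrt_eq_cfc, cfc_nnreal_eq_real _ A, hA.1.cfc_eq, hA.1.trace_cfc]
  simp [Real.coe_sqrt, Real.coe_toNNReal _ (hA.eigenvalues_nonneg _)]

lemma sq_diag_le_diag_mul_transpose (S : Matrix n n ℝ) (a : n) :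
    S a a ^ 2 ≤ (S * Sᵀ) a a := by
  rw [mul_apply]
  simp only [transpose_apply, ← sq]
  exact Finset.single_le_sum (fun b _ ↦ sq_nonneg (S a b)) (Finset.mem_univ a)

lemma PosSemidef.diag_le_sqrt_diag_mul_self {S : Matrix n n ℝ} (hS : S.PosSemidef) (a : n) :
    S a a ≤ √((S * S) a a) := by
  have hsymm : Sᵀ = S := by simpa [conjTranspose_eq_transpose_of_trivial] using hS.1.eq
  refine Real.le_sqrt_of_sq_le ?_
  simpa [hsymm] using sq_diag_le_diag_mul_transpose S a

end Matrix

/-- For a PSD matrix `A` with eigenvalues `λ_a`,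
`∑_a √(A_{aa}) ≥ ∑_a √(λ_a)`, i.e. `trace(Diag(A)^{1/2}) ≥ trace(A^{1/2})`. -/
theorem sum_sqrt_diag_ge_sum_sqrt_eigenvalues (d : ℕ)
    (A : Matrix (Fin d) (Fin d) ℝ) (hA : A.PosSemidef) :
    ∑ a, Real.sqrt (hA.1.eigenvalues a) ≤ ∑ a, Real.sqrt (A a a) := by
  have hS : (CFC.sqrt A).PosSemidef := (CFC.sqrt_nonneg A).posSemidef
  calc ∑ a, √(hA.1.eigenvalues a) = ∑ a, CFC.sqrt A a a := hA.trace_sqrt.symm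
    _ ≤ ∑ a, √((CFC.sqrt A * CFC.sqrt A) a a) :=
      Finset.sum_le_sum fun a _ ↦ hS.diag_le_sqrt_diag_mul_self a
    _ = ∑ a, √(A a a) := by rw [CFC.sqrt_mul_sqrt_self A hA.nonneg]
end
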